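/- For every real number E ≥ 0 and κ ≥ 1, the second derivative of ψ_{E,κ}(η) = g(κE + κ − ηE − 1) − g((1−η)E) at any η ∈ (0,1) with (κ−η)E + κ − 1 > 0 equals E(E+1)(κ−1)((κ+1−2η)E+κ) divided by (1−η)((κ−η)E+κ−1)((κ−η)E+κ)((1−η)E+1), which is nonnegative. -/

import Mathlib

/-!
Both arguments of `g` are affine in `η` with slope `-E`, and `g'' x = 1/(x+1) - 1/x = -1/(x(x+1))`.
Hence, with `a = (κ-η)E + κ - 1` and `b = (1-η)E`, the second derivative is
`E² (1/(b(b+1)) - 1/(a(a+1)))`. Since `a - b = (κ-1)(E+1)`, the numerator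
`a(a+1) - b(b+1) = (a-b)(a+b+1)` factors as `(κ-1)(E+1)((κ+1-2η)E + κ)`, and every factor is
nonnegative. For `E = 0` the function is constant.
-/

noncomputable def g (x : ℝ) : ℝ := (x + 1) * Real.log (x + 1) - x * Real.log x

open Real Filter Topology

lemma hasDerivAt_g {x : ℝ} (hx : 0 < x) : HasDerivAt g (log (x + 1) - log x) x := by
  have hsucc := (hasDerivAt_mul_log (by linarith : x + 1 ≠ 0)).comp x ((hasDerivAt_id x).add_const 1)
  exact (hsucc.sub (hasDerivAt_mul_log hx.ne')).congr_deriv (by ring)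

lemma hasDerivAt_log_add_one_sub_log {x : ℝ} (hx : 0 < x) :
    HasDerivAt (fun y => log (y + 1) - log y) (-(x * (x + 1))⁻¹) x := by
  have hsucc := (hasDerivAt_log (by linarith : x + 1 ≠ 0)).comp x ((hasDerivAt_id x).add_const 1)
  refine (hsucc.sub (hasDerivAt_log hx.ne')).congr_deriv ?_
  field_simp
  ring

lemma deriv_deriv_eq_of_eventually_hasDerivAt {𝕜 F : Type*} [NontriviallyNormedField 𝕜]
    [NormedAddCommGroup F] [NormedSpace 𝕜 F] {f f' : 𝕜 → F} {f'' : F} {x : 𝕜}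
    (hf : ∀ᶠ y in 𝓝 x, HasDerivAt f (f' y) y) (hf' : HasDerivAt f' f'' x) :
    deriv (deriv f) x = f'' := by
  rw [Filter.EventuallyEq.deriv_eq (hf.mono fun _ hy => hy.deriv), hf'.deriv]

lemma inv_mul_add_one_sub_inv_mul_add_one {a b : ℝ} (ha : a ≠ 0) (ha1 : a + 1 ≠ 0) (hb : b ≠ 0)
    (hb1 : b + 1 ≠ 0) :
    (b * (b + 1))⁻¹ - (a * (a + 1))⁻¹ = (a - b) * (a + b + 1) / (a * (a + 1) * (b * (b + 1))) := by
  field_simp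
  ring

lemma hasDerivAt_affine (m c t : ℝ) : HasDerivAt (fun y => m * y + c) m t := by
  simpa using ((hasDerivAt_id t).const_mul m).add_const c

lemma deriv_deriv_g_comp_affine_sub {m c d t : ℝ} (hc : 0 < m * t + c) (hd : 0 < m * t + d) :
    deriv (deriv fun y => g (m * y + c) - g (m * y + d)) t =
      m ^ 2 * (((m * t + d) * (m * t + d + 1))⁻¹ - ((m * t + c) * (m * t + c + 1))⁻¹) := by
  have hpos : ∀ᶠ y in 𝓝 t, 0 < m * y + c ∧ 0 < m * y + d := by
    have hcont : Continuous fun y => m * y := continuous_const_mul m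
    exact (continuousAt_const.eventually_lt (hcont.add_const c).continuousAt hc).and
      (continuousAt_const.eventually_lt (hcont.add_const d).continuousAt hd)
  refine deriv_deriv_eq_of_eventually_hasDerivAt
    (f' := fun y => (log (m * y + c + 1) - log (m * y + c)) * m
      - (log (m * y + d + 1) - log (m * y + d)) * m) ?_ ?_
  · filter_upwards [hpos] with y ⟨hcy, hdy⟩
    exact ((hasDerivAt_g hcy).comp y (hasDerivAt_affine m c y)).sub
      ((hasDerivAt_g hdy).comp y (hasDerivAt_affine m d y))
  · refine ((((hasDerivAt_log_add_one_sub_log hc).comp t (hasDerivAt_affine m c t)).mul_const m).sub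
      (((hasDerivAt_log_add_one_sub_log hd).comp t (hasDerivAt_affine m d t)).mul_const m)).congr_deriv ?_
    ring

/-- the second derivative of `ψ_{E,κ}` at `η ∈ (0,1)` with
`(κ−η)E + κ − 1 > 0` equals the stated explicit formula, which is nonnegative. -/
theorem psi_second_deriv (E κ : ℝ) (hE : 0 ≤ E) (hκ : 1 ≤ κ) (η : ℝ)
    (hη : η ∈ Set.Ioo (0 : ℝ) 1) (hpos : 0 < (κ - η) * E + κ - 1) :
    deriv (deriv (fun η : ℝ => g ((κ - η) * E + κ - 1) - g ((1 - η) * E))) η =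
      E * (E + 1) * (κ - 1) * ((κ + 1 - 2 * η) * E + κ) /
        ((1 - η) * ((κ - η) * E + κ - 1) * ((κ - η) * E + κ) * ((1 - η) * E + 1)) ∧
    0 ≤ E * (E + 1) * (κ - 1) * ((κ + 1 - 2 * η) * E + κ) /
        ((1 - η) * ((κ - η) * E + κ - 1) * ((κ - η) * E + κ) * ((1 - η) * E + 1)) := by
  obtain ⟨hη0, hη1⟩ := hη
  have h1η : 0 < 1 - η := by linarith
  have ha1 : 0 < (κ - η) * E + κ := by linarith
  have hb1 : 0 < (1 - η) * E + 1 := by nlinarith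
  have hden : 0 < (1 - η) * ((κ - η) * E + κ - 1) * ((κ - η) * E + κ) * ((1 - η) * E + 1) := by
    positivity
  have hnum : 0 ≤ E * (E + 1) * (κ - 1) * ((κ + 1 - 2 * η) * E + κ) := by
    have : 0 < (κ + 1 - 2 * η) * E + κ := by nlinarith
    have : 0 ≤ κ - 1 := by linarith
    positivity
  refine ⟨?_, div_nonneg hnum hden.le⟩
  rcases hE.eq_or_lt with rfl | hE
  · simp
  have hb : 0 < (1 - η) * E := by positivity
  have hψ : (fun η : ℝ => g ((κ - η) * E + κ - 1) - g ((1 - η) * E)) =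
      fun η => g (-E * η + (κ * E + κ - 1)) - g (-E * η + E) := by
    funext y
    ring_nf
  rw [hψ, deriv_deriv_g_comp_affine_sub (by linarith) (by linarith),
    show -E * η + (κ * E + κ - 1) = (κ - η) * E + κ - 1 by ring, show -E * η + E = (1 - η) * E by ring,
    inv_mul_add_one_sub_inv_mul_add_one hpos.ne' (by linarith) hb.ne' hb1.ne', mul_div_assoc',
    div_eq_div_iff (by positivity) hden.ne']
  ring
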